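/- In the single-parameter case where q_ij = q for all i < j (q ∈ ℂˣ), the weight function is w_q(k) = 1 if |q| ≥ 1, and w_q(k) = |q|^{∑_{i<j} k_i k_j} if |q| < 1, for all k ∈ ℤ₊ⁿ. -/

import Mathlib

/-!
The quantum affine space acts on `(Fin n → ℕ) →₀ ℂ` by letting `x a` send the basis vector `e v`
to `q0 ^ (∑_{j > a} v j) • e (v + 1_a)`; this respects the relations because `q0 ≠ 0`. A word `L`
then sends `e 0` to `q0 ^ asc L • e (deg L)`, where `asc L` counts the pairs of positions carrying
strictly increasing letters. So `x_α = λ x_{σ·α}` forces `q0 ^ asc α = λ q0 ^ asc (σ·α)`.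
For the sorted word `α = δ(k)` one has `asc α = D := ∑_{i<j} k_i k_j`, while every rearrangement
has `asc ≤ D`, since ascents and descents together count the pairs of distinct letters. Hence
`|λ| = |q0| ^ (D - m)` with `0 ≤ m ≤ D`, and both extremes occur: `m = D` for `σ = 1` and `m = 0`
for the reversal of `δ(k)`. The minimum is `1` if `|q0| ≥ 1` and `|q0| ^ D` if `|q0| < 1`.
-/

noncomputable section

/-- `q` is multiplicatively antisymmetric: `q i i = 1` and `q j i * q i j = 1`. -/
def MultAntisym (n : ℕ) (q : Fin n → Fin n → ℂ) : Prop :=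
  (∀ i, q i i = 1) ∧ (∀ i j, q j i * q i j = 1)

/-- Relations of the quantum affine space: `x i * x j = q i j • (x j * x i)`. -/
def QRel (n : ℕ) (q : Fin n → Fin n → ℂ) :
    FreeAlgebra ℂ (Fin n) → FreeAlgebra ℂ (Fin n) → Prop :=
  fun a b => ∃ i j, a = FreeAlgebra.ι ℂ i * FreeAlgebra.ι ℂ j ∧
    b = q i j • (FreeAlgebra.ι ℂ j * FreeAlgebra.ι ℂ i)

/-- The generators `x i` of the quantum affine space algebra `O_q^reg(ℂⁿ)`. -/
def qGen {n : ℕ} (q : Fin n → Fin n → ℂ) (i : Fin n) : RingQuot (QRel n q) :=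
  RingQuot.mkAlgHom ℂ (QRel n q) (FreeAlgebra.ι ℂ i)

/-- The monomial `x_α = x_{α 1} ⋯ x_{α d}` associated to a word `α`. -/
def xWord {n d : ℕ} (q : Fin n → Fin n → ℂ) (α : Fin d → Fin n) : RingQuot (QRel n q) :=
  ((List.ofFn α).map (qGen q)).prod

/-- The action of `S_d` on words: `(σ·α) i = α (σ⁻¹ i)`. -/
def permAct {n d : ℕ} (σ : Equiv.Perm (Fin d)) (α : Fin d → Fin n) : Fin d → Fin n :=
  α ∘ σ.symm

/-- `α` is the sorted word `δ(k)` of the multidegree `k` : the letter `i` repeated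
`k i` times, in increasing order. -/
def IsSortedWord {n : ℕ} (k : Fin n → ℕ) {m : ℕ} (α : Fin m → Fin n) : Prop :=
  List.ofFn α = (List.ofFn fun i : Fin n => List.replicate (k i) i).flatten

/-- The set `{ |λ(σ, δ(k))| : σ ∈ S_{|k|} }`, whose minimum is the weight `w_q(k)`. -/
def wSet {n : ℕ} (q : Fin n → Fin n → ℂ) (k : Fin n → ℕ) : Set ℝ :=
  {r | ∃ (σ : Equiv.Perm (Fin (∑ i, k i))) (lam : ℂ) (α : Fin (∑ i, k i) → Fin n),
    IsSortedWord k α ∧ xWord q α = lam • xWord q (permAct σ α) ∧ r = ‖lam‖}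


namespace QuantumAffineSpace

open Finset

variable {n : ℕ}

section Words

def sumAbove (a : Fin n) (v : Fin n → ℕ) : ℕ := ∑ j ∈ univ.filter (a < ·), v j

def sumBelow (a : Fin n) (v : Fin n → ℕ) : ℕ := ∑ j ∈ univ.filter (· < a), v j

def pairSum (v : Fin n → ℕ) : ℕ := ∑ i, v i * sumAbove i v

def degree (L : List (Fin n)) : Fin n → ℕ := fun j => L.count j

/-- The number of pairs of positions `i < j` with `L[i] < L[j]`. -/
def ascents : List (Fin n) → ℕ
  | [] => 0
  | a :: T => ascents T + sumAbove a (degree T)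

def descents : List (Fin n) → ℕ
  | [] => 0
  | a :: T => descents T + sumBelow a (degree T)

lemma sumAbove_add (a : Fin n) (v w : Fin n → ℕ) :
    sumAbove a (v + w) = sumAbove a v + sumAbove a w := by
  simp [sumAbove, sum_add_distrib]

lemma sumAbove_single (a b : Fin n) : sumAbove a (Pi.single b 1) = if a < b then 1 else 0 := by
  simp [sumAbove, sum_pi_single']

lemma pairSum_add_single (v : Fin n → ℕ) (a : Fin n) :
    pairSum (v + Pi.single a 1) = pairSum v + sumAbove a v + sumBelow a v := by
  have hterm : ∀ i, (v + Pi.single a 1 : Fin n → ℕ) i * sumAbove i (v + Pi.single a 1) =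
      v i * sumAbove i v + (if i = a then sumAbove a v else 0) + (if i < a then v i else 0) := by
    intro i
    rw [sumAbove_add, sumAbove_single]
    rcases eq_or_ne i a with rfl | hia
    · simp
      ring
    · by_cases hlt : i < a <;> simp [hia, hlt, mul_add]
  simp only [pairSum, hterm, sum_add_distrib, sum_ite_eq', mem_univ, if_true, sumBelow,
    sum_filter]

lemma pairSum_eq_sum_filter_lt (v : Fin n → ℕ) :
    pairSum v = ∑ p ∈ univ.filter (fun p : Fin n × Fin n => p.1 < p.2), v p.1 * v p.2 := by
  rw [sum_filter, Fintype.sum_prod_type]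
  exact sum_congr rfl fun i _ => by rw [sumAbove, mul_sum, sum_filter]

lemma degree_cons (a : Fin n) (T : List (Fin n)) :
    degree (a :: T) = degree T + Pi.single a 1 := by
  ext j
  rcases eq_or_ne a j with rfl | h
  · simp [degree]
  · simp [degree, h, h.symm]

lemma ascents_add_descents (L : List (Fin n)) : ascents L + descents L = pairSum (degree L) := by
  induction L with
  | nil => simp [ascents, descents, degree, pairSum]
  | cons a T ih =>
    rw [ascents, descents, degree_cons, pairSum_add_single]
    omega

lemma ascents_eq_zero {L : List (Fin n)} (h : L.Pairwise (· ≥ ·)) : ascents L = 0 := by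
  induction L with
  | nil => rfl
  | cons a T ih =>
    rw [List.pairwise_cons] at h
    refine (add_eq_zero.2 ⟨ih h.2, sum_eq_zero fun j hj => List.count_eq_zero.2 fun hjT => ?_⟩)
    exact (mem_filter.1 hj).2.not_ge (h.1 j hjT)

lemma descents_eq_zero {L : List (Fin n)} (h : L.Pairwise (· ≤ ·)) : descents L = 0 := by
  induction L with
  | nil => rfl
  | cons a T ih =>
    rw [List.pairwise_cons] at h
    refine (add_eq_zero.2 ⟨ih h.2, sum_eq_zero fun j hj => List.count_eq_zero.2 fun hjT => ?_⟩)
    exact (mem_filter.1 hj).2.not_ge (h.1 j hjT)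

def sortedList (k : Fin n → ℕ) : List (Fin n) :=
  (List.ofFn fun i : Fin n => List.replicate (k i) i).flatten

lemma length_sortedList (k : Fin n → ℕ) : (sortedList k).length = ∑ i, k i := by
  simp [sortedList, Function.comp_def, List.sum_ofFn]

lemma pairwise_le_sortedList (k : Fin n → ℕ) : (sortedList k).Pairwise (· ≤ ·) := by
  refine List.pairwise_flatten.2 ⟨?_, List.pairwise_ofFn.2 fun i j hij x hx y hy => ?_⟩
  · simp only [List.mem_ofFn, forall_exists_index]
    rintro l i rfl
    exact List.pairwise_replicate.2 (Or.inr le_rfl)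
  · rw [List.eq_of_mem_replicate hx, List.eq_of_mem_replicate hy]
    exact hij.le

lemma degree_sortedList (k : Fin n → ℕ) : degree (sortedList k) = k := by
  ext j
  simp [degree, sortedList, List.count_flatten, List.sum_ofFn, List.count_replicate]

lemma ascents_sortedList (k : Fin n → ℕ) : ascents (sortedList k) = pairSum k := by
  have h := ascents_add_descents (sortedList k)
  rwa [descents_eq_zero (pairwise_le_sortedList k), degree_sortedList, add_zero] at h

def sortedWord (k : Fin n → ℕ) : Fin (∑ i, k i) → Fin n :=
  (sortedList k).get ∘ Fin.cast (length_sortedList k).symm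

lemma isSortedWord_sortedWord (k : Fin n → ℕ) : IsSortedWord k (sortedWord k) := by
  rw [IsSortedWord, sortedWord, List.ofFn_congr (length_sortedList k).symm]
  exact List.ofFn_get _

lemma IsSortedWord.ofFn_eq {k : Fin n → ℕ} {m : ℕ} {α : Fin m → Fin n} (h : IsSortedWord k α) :
    List.ofFn α = sortedList k := h

lemma degree_ofFn_permAct {d : ℕ} (σ : Equiv.Perm (Fin d)) (α : Fin d → Fin n) :
    degree (List.ofFn (permAct σ α)) = degree (List.ofFn α) :=
  funext (Equiv.Perm.ofFn_comp_perm σ⁻¹ α).count_eq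

lemma ofFn_comp_rev {d : ℕ} {α : Type*} (f : Fin d → α) :
    List.ofFn (f ∘ Fin.rev) = (List.ofFn f).reverse := by
  refine List.ext_getElem (by simp) fun i h1 h2 => ?_
  simp only [List.getElem_ofFn, List.getElem_reverse, Function.comp_apply]
  congr 1
  ext
  simp only [List.length_ofFn] at h1 h2 ⊢
  simp [Fin.rev]
  omega

end Words

section Monomials

variable (q : Fin n → Fin n → ℂ)

def listMonomial (L : List (Fin n)) : RingQuot (QRel n q) := (L.map (qGen q)).prod

lemma xWord_eq_listMonomial {d : ℕ} (α : Fin d → Fin n) :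
    xWord q α = listMonomial q (List.ofFn α) := rfl

lemma listMonomial_cons (a : Fin n) (T : List (Fin n)) :
    listMonomial q (a :: T) = qGen q a * listMonomial q T := by
  simp [listMonomial]

lemma qGen_mul_qGen (i j : Fin n) : qGen q i * qGen q j = q i j • (qGen q j * qGen q i) := by
  have hrel : QRel n q (FreeAlgebra.ι ℂ i * FreeAlgebra.ι ℂ j)
      (q i j • (FreeAlgebra.ι ℂ j * FreeAlgebra.ι ℂ i)) := ⟨i, j, rfl, rfl⟩
  simpa [qGen] using RingQuot.mkAlgHom_rel ℂ hrel

lemma exists_qGen_mul_listMonomial (a : Fin n) (L : List (Fin n)) :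
    ∃ c : ℂ, qGen q a * listMonomial q L = c • (listMonomial q L * qGen q a) := by
  induction L with
  | nil => exact ⟨1, by simp [listMonomial]⟩
  | cons b T ih =>
    obtain ⟨c, hc⟩ := ih
    refine ⟨q a b * c, ?_⟩
    rw [listMonomial_cons, ← mul_assoc, qGen_mul_qGen, smul_mul_assoc, mul_assoc, hc,
      mul_smul_comm, mul_assoc, smul_smul]

lemma exists_listMonomial_eq_smul_reverse (L : List (Fin n)) :
    ∃ c : ℂ, listMonomial q L = c • listMonomial q L.reverse := by
  induction L with
  | nil => exact ⟨1, by simp⟩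
  | cons a T ih =>
    obtain ⟨c, hc⟩ := ih
    obtain ⟨c', hc'⟩ := exists_qGen_mul_listMonomial q a T.reverse
    refine ⟨c * c', ?_⟩
    rw [listMonomial_cons, hc, mul_smul_comm, hc', smul_smul]
    simp [listMonomial]

end Monomials

section Representation

def IsSingleParameter (q : Fin n → Fin n → ℂ) (q0 : ℂ) : Prop :=
  ∀ i j, q i j = if i < j then q0 else if j < i then q0⁻¹ else 1

lemma IsSingleParameter.pow_eq_mul_pow {q : Fin n → Fin n → ℂ} {q0 : ℂ}
    (hq : IsSingleParameter q q0) (hq0 : q0 ≠ 0) (i j : Fin n) :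
    q0 ^ (if i < j then 1 else 0) = q i j * q0 ^ (if j < i then 1 else 0) := by
  rw [hq i j]
  rcases lt_trichotomy i j with h | rfl | h
  · simp [h, h.not_gt]
  · simp
  · simp [h, h.not_gt, hq0]

def shiftOp (q0 : ℂ) (a : Fin n) : Module.End ℂ ((Fin n → ℕ) →₀ ℂ) :=
  Finsupp.lsum ℂ fun v => q0 ^ sumAbove a v • Finsupp.lsingle (v + Pi.single a 1)

lemma shiftOp_single (q0 : ℂ) (a : Fin n) (v : Fin n → ℕ) (c : ℂ) :
    shiftOp q0 a (Finsupp.single v c) =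
      q0 ^ sumAbove a v • Finsupp.single (v + Pi.single a 1) c := by
  simp [shiftOp]

variable {q : Fin n → Fin n → ℂ} {q0 : ℂ} (hq : IsSingleParameter q q0) (hq0 : q0 ≠ 0)

include hq hq0 in
lemma shiftOp_mul_shiftOp (i j : Fin n) :
    shiftOp q0 i * shiftOp q0 j = q i j • (shiftOp q0 j * shiftOp q0 i) := by
  refine Finsupp.lhom_ext fun v c => ?_
  simp only [LinearMap.smul_apply, Module.End.mul_apply, shiftOp_single, map_smul, smul_smul,
    sumAbove_add, sumAbove_single, pow_add, add_right_comm v (Pi.single i 1)]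
  rw [hq.pow_eq_mul_pow hq0 i j]
  ring_nf

def monomialRep : RingQuot (QRel n q) →ₐ[ℂ] Module.End ℂ ((Fin n → ℕ) →₀ ℂ) :=
  RingQuot.liftAlgHom ℂ ⟨FreeAlgebra.lift ℂ (shiftOp q0), by
    rintro _ _ ⟨i, j, rfl, rfl⟩
    simpa using shiftOp_mul_shiftOp hq hq0 i j⟩

lemma monomialRep_listMonomial (L : List (Fin n)) :
    monomialRep hq hq0 (listMonomial q L) (Finsupp.single 0 1) =
      q0 ^ ascents L • Finsupp.single (degree L) 1 := by
  induction L with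
  | nil => simp [listMonomial, ascents]; rfl
  | cons a T ih =>
    rw [listMonomial_cons, map_mul, Module.End.mul_apply, ih, map_smul, monomialRep, qGen,
      RingQuot.liftAlgHom_mkAlgHom_apply, FreeAlgebra.lift_ι_apply, shiftOp_single, smul_smul,
      ← pow_add, ascents, degree_cons]

include hq hq0 in
lemma pow_ascents_eq_mul_pow_ascents {A B : List (Fin n)} {lam : ℂ}
    (hAB : listMonomial q A = lam • listMonomial q B) (hdeg : degree A = degree B) :
    q0 ^ ascents A = lam * q0 ^ ascents B := by
  have h := congrArg (fun x => monomialRep hq hq0 x (Finsupp.single 0 1)) hAB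
  simp only [map_smul, LinearMap.smul_apply, monomialRep_listMonomial, hdeg, smul_smul] at h
  simpa using congrArg (· (degree B)) h

end Representation

section Weight

variable {q : Fin n → Fin n → ℂ} {q0 : ℂ}

lemma one_mem_wSet (k : Fin n → ℕ) : (1 : ℝ) ∈ wSet q k :=
  ⟨1, 1, sortedWord k, isSortedWord_sortedWord k, (one_smul ℂ _).symm, norm_one.symm⟩

lemma norm_pow_pairSum_mem_wSet (hq : IsSingleParameter q q0) (hq0 : q0 ≠ 0)
    (k : Fin n → ℕ) : ‖q0‖ ^ pairSum k ∈ wSet q k := by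
  obtain ⟨c, hc⟩ := exists_listMonomial_eq_smul_reverse q (sortedList k)
  have hrev : List.ofFn (permAct Fin.revPerm (sortedWord k)) = (sortedList k).reverse := by
    rw [permAct, Fin.revPerm_symm]
    exact (ofFn_comp_rev _).trans (congrArg _ (isSortedWord_sortedWord k))
  refine ⟨Fin.revPerm, c, sortedWord k, isSortedWord_sortedWord k, ?_, ?_⟩
  · rwa [xWord_eq_listMonomial, xWord_eq_listMonomial, hrev, isSortedWord_sortedWord k]
  · have h := pow_ascents_eq_mul_pow_ascents hq hq0 hc (by ext j; simp [degree])
    rw [ascents_sortedList, ascents_eq_zero (List.pairwise_reverse.2 (pairwise_le_sortedList k)),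
      pow_zero, mul_one] at h
    rw [← h, norm_pow]

-- That is, `r = ‖q0‖ ^ (pairSum k - m)`, stated without truncated subtraction.
lemma exists_mul_norm_pow_eq_of_mem_wSet (hq : IsSingleParameter q q0) (hq0 : q0 ≠ 0)
    {k : Fin n → ℕ} {r : ℝ} (hr : r ∈ wSet q k) :
    ∃ m ≤ pairSum k, r * ‖q0‖ ^ m = ‖q0‖ ^ pairSum k := by
  obtain ⟨σ, lam, α, hα, hx, rfl⟩ := hr
  have hdeg : degree (List.ofFn (permAct σ α)) = k := by
    rw [degree_ofFn_permAct, IsSortedWord.ofFn_eq hα, degree_sortedList]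
  refine ⟨ascents (List.ofFn (permAct σ α)), ?_, ?_⟩
  · calc ascents _ ≤ ascents _ + descents _ := Nat.le_add_right _ _
      _ = pairSum k := by rw [ascents_add_descents, hdeg]
  · have h := pow_ascents_eq_mul_pow_ascents hq hq0 hx (degree_ofFn_permAct σ α).symm
    rw [IsSortedWord.ofFn_eq hα, ascents_sortedList] at h
    rw [← norm_pow, ← norm_pow, ← norm_mul, h]

lemma isLeast_wSet_one (hq : IsSingleParameter q q0) (hq0 : q0 ≠ 0) (h : 1 ≤ ‖q0‖)
    (k : Fin n → ℕ) : IsLeast (wSet q k) 1 := by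
  refine ⟨one_mem_wSet k, fun r hr => ?_⟩
  obtain ⟨m, hm, hrm⟩ := exists_mul_norm_pow_eq_of_mem_wSet hq hq0 hr
  have hpos : 0 < ‖q0‖ ^ m := pow_pos (norm_pos_iff.2 hq0) m
  have : ‖q0‖ ^ m ≤ ‖q0‖ ^ pairSum k := pow_le_pow_right₀ h hm
  nlinarith

lemma isLeast_wSet_norm_pow_pairSum (hq : IsSingleParameter q q0) (hq0 : q0 ≠ 0)
    (h : ‖q0‖ ≤ 1) (k : Fin n → ℕ) : IsLeast (wSet q k) (‖q0‖ ^ pairSum k) := by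
  refine ⟨norm_pow_pairSum_mem_wSet hq hq0 k, fun r hr => ?_⟩
  obtain ⟨m, -, hrm⟩ := exists_mul_norm_pow_eq_of_mem_wSet hq hq0 hr
  have hr0 : 0 ≤ r := by
    obtain ⟨_, _, _, _, _, rfl⟩ := hr
    exact norm_nonneg _
  rw [← hrm]
  exact mul_le_of_le_one_right hr0 (pow_le_one₀ (norm_nonneg q0) h)

end Weight

end QuantumAffineSpace

open QuantumAffineSpace in
theorem weight_formula_single_parameter (n : ℕ) (q0 : ℂ) (hq0 : q0 ≠ 0)
    (q : Fin n → Fin n → ℂ)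
    (hq : ∀ i j : Fin n, q i j = if i < j then q0 else if j < i then q0⁻¹ else 1)
    (w : (Fin n → ℕ) → ℝ) (hw : ∀ k, IsLeast (wSet q k) (w k)) :
    (1 ≤ ‖q0‖ → ∀ k : Fin n → ℕ, w k = 1) ∧
    (‖q0‖ < 1 → ∀ k : Fin n → ℕ,
      w k = ‖q0‖ ^
        (∑ p ∈ Finset.univ.filter (fun p : Fin n × Fin n => p.1 < p.2),
          k p.1 * k p.2)) := by
  refine ⟨fun h k => (hw k).unique (isLeast_wSet_one hq hq0 h k), fun h k => ?_⟩
  rw [← pairSum_eq_sum_filter_lt]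
  exact (hw k).unique (isLeast_wSet_norm_pow_pairSum hq hq0 h.le k)
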